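/- For every unitary matrix U ∈ U(d), the minimax equality max_{E ∈ 𝒟𝒰_d} min_{ρ ∈ 𝒟(ℂ^d)} |Tr(ρUE)| = min_{ρ ∈ 𝒟(ℂ^d)} max_{E ∈ 𝒟𝒰_d} |Tr(ρUE)| holds (both optima are attained by compactness). -/

import Mathlib

open Matrix MeasureTheory
open scoped ENNReal ComplexOrder

noncomputable section

namespace Paper

/-- The old Mathlib `Matrix.PosSemidef.sqrt` (removed since), with its old definition. -/
noncomputable def psdSqrt {n : Type*} [Fintype n] [DecidableEq n] {A : Matrix n n ℂ}
    (hA : A.PosSemidef) : Matrix n n ℂ :=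
  (hA.1.eigenvectorUnitary : Matrix n n ℂ) * diagonal ((↑) ∘ (hA.1.eigenvalues · |>.sqrt)) *
    (star hA.1.eigenvectorUnitary : Matrix n n ℂ)

/-- Trace norm `‖X‖₁ = Tr √(Xᴴ X)`. -/
noncomputable def traceNorm {n : Type*} [Fintype n] [DecidableEq n] (X : Matrix n n ℂ) : ℝ :=
  ((psdSqrt (Matrix.posSemidef_conjTranspose_mul_self X)).trace).re

/-- `(S ⊗ id)(X)`, the map `S` applied to the first tensor factor. -/
def tensorApplyLeft {n n' m : Type*} [Fintype n] [Fintype m]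
    (S : Matrix n n ℂ →ₗ[ℂ] Matrix n' n' ℂ)
    (X : Matrix (n × m) (n × m) ℂ) : Matrix (n' × m) (n' × m) ℂ :=
  Matrix.of fun p q => S (Matrix.of fun i j => X (i, p.2) (j, q.2)) p.1 q.1

/-- Diamond norm of a linear map between matrix spaces. -/
noncomputable def diamondNorm {n n' : Type*} [Fintype n] [DecidableEq n] [Fintype n']
    [DecidableEq n'] (S : Matrix n n ℂ →ₗ[ℂ] Matrix n' n' ℂ) : ℝ :=
  sSup { t : ℝ | ∃ (k : ℕ) (X : Matrix (n × Fin (k + 1)) (n × Fin (k + 1)) ℂ),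
    traceNorm X = 1 ∧ t = traceNorm (tensorApplyLeft S X) }

/-- The completely dephasing channel in the standard basis. -/
def dephaseMap (n : Type*) [Fintype n] [DecidableEq n] :
    Matrix n n ℂ →ₗ[ℂ] Matrix n n ℂ where
  toFun X := Matrix.diagonal fun i => X i i
  map_add' X Y := by
    ext i j
    by_cases h : i = j <;> simp [Matrix.diagonal_apply, h]
  map_smul' c X := by
    ext i j
    by_cases h : i = j <;> simp [Matrix.diagonal_apply, h]

/-- The unitary channel `Φ_U(X) = U X Uᴴ`. -/
def unitaryChannel {n : Type*} [Fintype n] (U : Matrix n n ℂ) :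
    Matrix n n ℂ →ₗ[ℂ] Matrix n n ℂ where
  toFun X := U * X * Uᴴ
  map_add' X Y := by simp [Matrix.mul_add, Matrix.add_mul]
  map_smul' c X := by simp [mul_smul_comm, smul_mul_assoc]

/-- The von Neumann measurement channel `𝒫_U(σ) = Σ_i ⟨i|U† σ U|i⟩ |i⟩⟨i| = diag(U† σ U)`. -/
def measChannel {n : Type*} [Fintype n] [DecidableEq n] (U : Matrix n n ℂ) :
    Matrix n n ℂ →ₗ[ℂ] Matrix n n ℂ :=
  (dephaseMap n).comp (unitaryChannel Uᴴ)

/-- `N`-fold tensor (Kronecker) power of a matrix. -/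
def tensorPow {d : ℕ} (U : Matrix (Fin d) (Fin d) ℂ) (N : ℕ) :
    Matrix (Fin N → Fin d) (Fin N → Fin d) ℂ :=
  Matrix.of fun f g => ∏ k, U (f k) (g k)

/-- Tensor product of a family of `d × d` matrices. -/
def tensorFamily {d N : ℕ} (ρ : Fin N → Matrix (Fin d) (Fin d) ℂ) :
    Matrix (Fin N → Fin d) (Fin N → Fin d) ℂ :=
  Matrix.of fun f g => ∏ k, (ρ k) (f k) (g k)

/-- Density matrices. -/
def IsDensityMatrix {n : Type*} [Fintype n] (ρ : Matrix n n ℂ) : Prop :=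
  ρ.PosSemidef ∧ ρ.trace = 1

/-- The set of diagonal unitary matrices `𝒟𝒰`. -/
def diagUnitary (n : Type*) [Fintype n] [DecidableEq n] : Set (Matrix n n ℂ) :=
  { E | E ∈ Matrix.unitaryGroup n ℂ ∧ E.IsDiag }

/-- `Θ(U)`: the angle of the shortest arc of the unit circle containing all eigenvalues. -/
noncomputable def thetaArc {n : Type*} [Fintype n] [DecidableEq n] (U : Matrix n n ℂ) : ℝ :=
  sInf { t : ℝ | 0 ≤ t ∧ ∃ α : ℝ, ∀ lam ∈ spectrum ℂ U, ∃ s : ℝ, 0 ≤ s ∧ s ≤ t ∧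
    lam = Complex.exp (Complex.I * (↑α + ↑s)) }

/-- `Υ(U) = min_{E ∈ 𝒟𝒰} Θ(UE)`. -/
noncomputable def upsilonArc {n : Type*} [Fintype n] [DecidableEq n] (U : Matrix n n ℂ) : ℝ :=
  sInf { t : ℝ | ∃ E ∈ diagUnitary n, t = thetaArc (U * E) }

/-- Numerical range `W(A)`. -/
def numericalRange {n : Type*} [Fintype n] (A : Matrix n n ℂ) : Set ℂ :=
  { z | ∃ x : n → ℂ, (∑ i, ‖x i‖ ^ 2) = 1 ∧ z = star x ⬝ᵥ A.mulVec x }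

/-- minimal modulus over the numerical range -/
noncomputable def nuMin {n : Type*} [Fintype n] (A : Matrix n n ℂ) : ℝ :=
  sInf { r : ℝ | ∃ z ∈ numericalRange A, r = ‖z‖ }

/-- Operator (spectral) norm of a matrix. -/
noncomputable def opNorm {n : Type*} [Fintype n] [DecidableEq n] (A : Matrix n n ℂ) : ℝ :=
  ‖Matrix.toEuclideanCLM (𝕜 := ℂ) A‖

/-- Matrix of the orthogonal projection onto a subspace of `EuclideanSpace ℂ n`. -/
noncomputable def projMatrix {n : Type*} [Fintype n] [DecidableEq n]
    (K : Submodule ℂ (EuclideanSpace ℂ n)) : Matrix n n ℂ :=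
  Matrix.toEuclideanLin.symm (K.subtype ∘ₗ K.orthogonalProjectionOnto.toLinearMap)

/-- Matrix of the orthogonal projection onto the eigenspace of `A` for eigenvalue `lam`. -/
noncomputable def eigProj {n : Type*} [Fintype n] [DecidableEq n] (A : Matrix n n ℂ) (lam : ℂ) :
    Matrix n n ℂ :=
  projMatrix (Module.End.eigenspace (Matrix.toEuclideanLin A) lam)

end Paper

namespace Paper

/-- Optimal unambiguous discrimination probability of `𝒫_𝟙` vs `𝒫_U` without entanglement. -/
noncomputable def puNoEnt {n : Type*} [Fintype n] [DecidableEq n] (U : Matrix n n ℂ) : ℝ :=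
  sSup { t : ℝ | ∃ σ M₁ M₂ M₃ : Matrix n n ℂ,
    IsDensityMatrix σ ∧ M₁.PosSemidef ∧ M₂.PosSemidef ∧ M₃.PosSemidef ∧ M₁ + M₂ + M₃ = 1 ∧
    (M₂ * measChannel (1 : Matrix n n ℂ) σ).trace = 0 ∧
    (M₁ * measChannel U σ).trace = 0 ∧
    t = (1 / 2) * (((M₁ * measChannel (1 : Matrix n n ℂ) σ).trace).re +
                   ((M₂ * measChannel U σ).trace).re) }

/-- Optimal entanglement-assisted unambiguous discrimination probability of `𝒫_𝟙` vs `𝒫_U`. -/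
noncomputable def puEnt {n : Type*} [Fintype n] [DecidableEq n] (U : Matrix n n ℂ) : ℝ :=
  sSup { t : ℝ | ∃ (k : ℕ) (σ M₁ M₂ M₃ : Matrix (n × Fin (k + 1)) (n × Fin (k + 1)) ℂ),
    IsDensityMatrix σ ∧ M₁.PosSemidef ∧ M₂.PosSemidef ∧ M₃.PosSemidef ∧ M₁ + M₂ + M₃ = 1 ∧
    (M₂ * tensorApplyLeft (measChannel (1 : Matrix n n ℂ)) σ).trace = 0 ∧
    (M₁ * tensorApplyLeft (measChannel U) σ).trace = 0 ∧
    t = (1 / 2) * (((M₁ * tensorApplyLeft (measChannel (1 : Matrix n n ℂ)) σ).trace).re +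
                   ((M₂ * tensorApplyLeft (measChannel U) σ).trace).re) }

/-- `Π_A = Σ_{i ∈ A} |i⟩⟨i|`. -/
noncomputable def basisProj {n : Type*} [Fintype n] [DecidableEq n] (A : Finset n) :
    Matrix n n ℂ :=
  ∑ i ∈ A, Matrix.single i i (1 : ℂ)

/-- `ℙ_{Γ,Δ}`: projector onto `span{U|i⟩ : i ∈ Γᶜ} ∩ span{|j⟩ : j ∈ Δᶜ}`. -/
noncomputable def PGD {n : Type*} [Fintype n] [DecidableEq n] (U : Matrix n n ℂ)
    (Γ Δ : Finset n) : Matrix n n ℂ :=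
  projMatrix
    ((Submodule.span ℂ { v : EuclideanSpace ℂ n |
        ∃ i ∉ Γ, v = (WithLp.equiv 2 (n → ℂ)).symm (fun r => U r i) }) ⊓
     (Submodule.span ℂ { v : EuclideanSpace ℂ n |
        ∃ j ∉ Δ, v = (WithLp.equiv 2 (n → ℂ)).symm (Pi.single j 1) }))

/-- `W` acting on the `k`-th of `N` registers (identity elsewhere). -/
def actOn {d : ℕ} (N : ℕ) (W : Matrix (Fin d) (Fin d) ℂ) (k : ℕ) :
    Matrix (Fin N → Fin d) (Fin N → Fin d) ℂ :=
  Matrix.of fun f g => ∏ j : Fin N,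
    if (j : ℕ) = k then W (f j) (g j) else (if f j = g j then (1 : ℂ) else 0)

/-- A system operator extended by identity on the ancilla. -/
def sysOp {d N m : ℕ} (A : Matrix (Fin N → Fin d) (Fin N → Fin d) ℂ) :
    Matrix ((Fin N → Fin d) × Fin m) ((Fin N → Fin d) × Fin m) ℂ :=
  Matrix.of fun p q => A p.1 q.1 * (if p.2 = q.2 then (1 : ℂ) else 0)

/-- `C` is classically controlled on the first `k` registers, i.e. of the form
`Σ_{i₁,…,i_k} |i₁…i_k⟩⟨i₁…i_k| ⊗ V_{i₁…i_k}`. -/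
def ControlledOnFirst {d N m : ℕ} (k : ℕ)
    (C : Matrix ((Fin N → Fin d) × Fin m) ((Fin N → Fin d) × Fin m) ℂ) : Prop :=
  ∀ p q, (∃ j : Fin N, (j : ℕ) < k ∧ p.1 j ≠ q.1 j) → C p q = 0

/-- The sequential-scheme unitary
`A_W = (𝟙⊗…⊗W⊗𝟙ₘ)·C_{N-1}·…·C₁·(W⊗𝟙⊗…⊗𝟙ₘ)`. -/
noncomputable def seqUnitary {d N m : ℕ} (W : Matrix (Fin d) (Fin d) ℂ)
    (C : ℕ → Matrix ((Fin N → Fin d) × Fin m) ((Fin N → Fin d) × Fin m) ℂ) :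
    Matrix ((Fin N → Fin d) × Fin m) ((Fin N → Fin d) × Fin m) ℂ :=
  (((List.range (N - 1)).reverse.map fun j =>
      sysOp (actOn N W (j + 1)) * C (j + 1)).prod) * sysOp (actOn N W 0)

/-- Dephasing in the standard product basis on the first `N` registers only. -/
def dephaseFirst (d N m : ℕ) :
    Matrix ((Fin N → Fin d) × Fin m) ((Fin N → Fin d) × Fin m) ℂ →ₗ[ℂ]
    Matrix ((Fin N → Fin d) × Fin m) ((Fin N → Fin d) × Fin m) ℂ where
  toFun X := Matrix.of fun p q => if p.1 = q.1 then X p q else 0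
  map_add' X Y := by
    ext p q
    by_cases h : p.1 = q.1 <;> simp [h]
  map_smul' c X := by
    ext p q
    by_cases h : p.1 = q.1 <;> simp [h]

/-- The Hadamard matrix. -/
noncomputable def Hmat : Matrix (Fin 2) (Fin 2) ℂ :=
  (((1 : ℝ) / Real.sqrt 2 : ℝ) : ℂ) • !![1, 1; 1, -1]

/-- `ψ = (|1⟩⊗|1⟩ − |2⟩⊗|2⟩)/√2`. -/
noncomputable def psiVec : Fin 2 × Fin 2 → ℂ := fun p =>
  if p = (0, 0) then (((1 : ℝ) / Real.sqrt 2 : ℝ) : ℂ)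
  else if p = (1, 1) then -(((1 : ℝ) / Real.sqrt 2 : ℝ) : ℂ) else 0

/-- `ρ = |ψ⟩⟨ψ|`. -/
noncomputable def rhoPsi : Matrix (Fin 2 × Fin 2) (Fin 2 × Fin 2) ℂ :=
  Matrix.of fun p q => psiVec p * (starRingEnd ℂ) (psiVec q)

end Paper

namespace Paper

/-!
Weak duality is formal. For the converse let `m` be the min-max value. Since
`|Tr(ρ U E)| ≤ ∑ⱼ |(ρ U)ⱼⱼ|` for every diagonal unitary `E`, the `ℓ¹`-norm is at least `m` on
the convex set of diagonals of the matrices `ρ U`, and Hahn–Banach (`ℓ¹`–`ℓ^∞` duality) gives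
weights `w` in the closed unit polydisc with `m ≤ Re Tr(ρ U diag w)` for all density matrices `ρ`.
Write `w = c ε` with `0 ≤ c ≤ 1`, `|ε| = 1`, and put `V = U diag ε`. A unit eigenvector `x` of
the unitary `V`, with eigenvalue `ν`, is also a left eigenvector, so testing on `ρ = x x†` gives
`m ≤ Re ν · (x† diag c x)` with `0 ≤ x† diag c x ≤ 1`, whence `m ≤ Re ν`. As `V` is normal, this
bound on its spectrum gives `V + V† ≥ 2m`, i.e. `m ≤ Re Tr(ρ V) ≤ |Tr(ρ U diag ε)|` for every `ρ`.
-/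

open Complex
open scoped ComplexConjugate

section Linear

variable {n R 𝕜 : Type*} [Fintype n]

theorem trace_mul_diagonal [DecidableEq n] [NonUnitalNonAssocSemiring R] (A : Matrix n n R)
    (c : n → R) : (A * diagonal c).trace = ∑ j, A j j * c j := by
  simp [trace, mul_diagonal]

theorem trace_vecMulVec_mul [CommSemiring R] (x y : n → R) (A : Matrix n n R) :
    (vecMulVec x y * A).trace = y ⬝ᵥ (A *ᵥ x) := by
  simp only [trace, diag_apply, mul_apply, vecMulVec_apply, dotProduct, mulVec, Finset.mul_sum]
  rw [Finset.sum_comm]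
  exact Finset.sum_congr rfl fun _ _ => Finset.sum_congr rfl fun _ _ => by ring

theorem _root_.Matrix.PosSemidef.trace_mul_nonneg [RCLike 𝕜] [DecidableEq n]
    {A B : Matrix n n 𝕜} (hA : A.PosSemidef) (hB : B.PosSemidef) : 0 ≤ (A * B).trace := by
  set W : Matrix n n 𝕜 := (hB.1.eigenvectorUnitary : Matrix n n 𝕜)
  have hWAW : (Wᴴ * A * W).PosSemidef := hA.conjTranspose_mul_mul_same W
  rw [hB.1.spectral_theorem, Unitary.conjStarAlgAut_apply, ← Matrix.mul_assoc, trace_mul_comm,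
    ← Matrix.mul_assoc, ← Matrix.mul_assoc, star_eq_conjTranspose, trace_mul_diagonal]
  exact Finset.sum_nonneg fun i _ => mul_nonneg hWAW.diag_nonneg
    (by simpa using hB.eigenvalues_nonneg i)

theorem norm_trace_mul_le_sum_norm_diag [RCLike 𝕜] [DecidableEq n] (A : Matrix n n 𝕜)
    {E : Matrix n n 𝕜} (hE : E ∈ unitaryGroup n 𝕜) (hE' : E.IsDiag) :
    ‖(A * E).trace‖ ≤ ∑ j, ‖A j j‖ := by
  rw [← hE'.diagonal_diag, trace_mul_diagonal]
  refine (norm_sum_le _ _).trans (Finset.sum_le_sum fun j _ => ?_)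
  rw [norm_mul]
  exact mul_le_of_le_one_right (norm_nonneg _) (entry_norm_bound_of_unitary hE j j)

theorem conjTranspose_mulVec_eq_star_smul [RCLike 𝕜] [DecidableEq n] {V : Matrix n n 𝕜}
    (hV : V ∈ unitaryGroup n 𝕜) {ν : 𝕜} {x : n → 𝕜} (hx : x ≠ 0) (hVx : V *ᵥ x = ν • x) :
    Vᴴ *ᵥ x = star ν • x := by
  have hVV : Vᴴ * V = 1 := mem_unitaryGroup_iff'.mp hV
  have hx' : x = ν • Vᴴ *ᵥ x := by rw [← mulVec_smul, ← hVx, mulVec_mulVec, hVV, one_mulVec]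
  have hν : star ν * ν = 1 := by
    have h : star x ⬝ᵥ x = star ν * ν * (star x ⬝ᵥ x) := by
      calc star x ⬝ᵥ x = star (V *ᵥ x) ⬝ᵥ (V *ᵥ x) := by
            rw [star_mulVec, ← dotProduct_mulVec, mulVec_mulVec, hVV, one_mulVec]
        _ = _ := by
          rw [hVx, star_smul, smul_dotProduct, dotProduct_smul, smul_eq_mul, smul_eq_mul,
            mul_assoc]
    exact (mul_eq_right₀ (dotProduct_star_self_eq_zero.not.mpr hx)).mp h.symm
  calc Vᴴ *ᵥ x = (star ν * ν) • Vᴴ *ᵥ x := by rw [hν, one_smul]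
    _ = star ν • x := by rw [mul_smul, ← hx']

theorem exists_smul_star_dotProduct_self_eq_one {x : n → ℂ} (hx : x ≠ 0) :
    ∃ a : ℂ, a ≠ 0 ∧ star (a • x) ⬝ᵥ (a • x) = 1 := by
  obtain ⟨r, hr, hxr⟩ : ∃ r : ℝ, 0 < r ∧ star x ⬝ᵥ x = r := by
    obtain ⟨hre, him⟩ := Complex.pos_iff.mp (dotProduct_star_self_pos_iff.mpr hx)
    exact ⟨_, hre, Complex.ext rfl (by simp [him])⟩
  refine ⟨((√r)⁻¹ : ℝ), by simpa [Real.sqrt_ne_zero'] using hr, ?_⟩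
  rw [star_smul, smul_dotProduct, dotProduct_smul, hxr, Complex.star_def, conj_ofReal,
    smul_eq_mul, smul_eq_mul, ← ofReal_mul, ← ofReal_mul, ← mul_assoc, ← mul_inv,
    Real.mul_self_sqrt hr.le, inv_mul_cancel₀ hr.ne', ofReal_one]

theorem _root_.Module.End.exists_hasEigenvector_of_commute {K V : Type*} [Field K]
    [IsAlgClosed K] [AddCommGroup V] [Module K V] [FiniteDimensional K V]
    {f g : Module.End K V} (hfg : Commute f g) {μ : K} (hμ : f.HasEigenvalue μ) :
    ∃ (ν : K) (x : V), f.HasEigenvector μ x ∧ g.HasEigenvector ν x := by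
  have hmaps : ∀ x ∈ f.eigenspace μ, g x ∈ f.eigenspace μ :=
    fun x hx => f.mapsTo_genEigenspace_of_comm hfg μ 1 hx
  have : Nontrivial (f.eigenspace μ) := Submodule.nontrivial_iff_ne_bot.mpr hμ
  obtain ⟨ν, hν⟩ := Module.End.exists_eigenvalue (g.restrict hmaps)
  obtain ⟨y, hy⟩ := hν.exists_hasEigenvector
  have hy0 : (y : V) ≠ 0 := by simpa using hy.2
  refine ⟨ν, y, ⟨y.2, hy0⟩, ⟨?_, hy0⟩⟩
  have := congrArg Subtype.val hy.apply_eq_smul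
  simpa [Module.End.mem_eigenspace_iff, LinearMap.restrict_apply] using this

end Linear

section Separation

variable {ι : Type*} [Fintype ι]

theorem convexOn_sum_norm : ConvexOn ℝ Set.univ (fun z : ι → ℂ => ∑ j, ‖z j‖) := by
  have := Finset.sum_induction (fun j (z : ι → ℂ) => ‖z j‖) (ConvexOn ℝ Set.univ)
    (s := Finset.univ) (fun _ _ => ConvexOn.add) (convexOn_const 0 convex_univ)
    fun j _ => (convexOn_norm (E := ℂ) convex_univ).comp_linearMap
      (LinearMap.proj (R := ℝ) (φ := fun _ : ι => ℂ) j)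
  simpa only [Finset.sum_fn] using this

theorem exists_eq_re_sum_mul [DecidableEq ι] (f : (ι → ℂ) →ₗ[ℝ] ℝ) :
    ∃ w : ι → ℂ, ∀ z, f z = (∑ j, w j * z j).re := by
  refine ⟨fun j => f (Pi.single j 1) - f (Pi.single j I) * I, fun z => ?_⟩
  have hsingle : ∀ j, Pi.single j (z j) =
      (z j).re • (Pi.single j 1 : ι → ℂ) + (z j).im • (Pi.single j I : ι → ℂ) := by
    intro j
    rw [← Pi.single_smul, ← Pi.single_smul, ← Pi.single_add, real_smul, real_smul, mul_one,
      re_add_im]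
  calc f z = ∑ j, f (Pi.single j (z j)) := by rw [← map_sum, Finset.univ_sum_single]
    _ = _ := by
      simp only [hsingle, map_add, map_smul, smul_eq_mul, re_sum, mul_re, mul_im, sub_re,
        sub_im, ofReal_re, ofReal_im, I_re, I_im]
      congr 1
      ext j
      ring

theorem exists_norm_le_one_le_re_sum_mul [DecidableEq ι] {C : Set (ι → ℂ)} (hC : Convex ℝ C)
    {m : ℝ} (hm : ∀ z ∈ C, m ≤ ∑ j, ‖z j‖) :
    ∃ w : ι → ℂ, (∀ j, ‖w j‖ ≤ 1) ∧ ∀ z ∈ C, m ≤ (∑ j, w j * z j).re := by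
  rcases le_or_gt m 0 with hm0 | hm0
  · exact ⟨0, by simp, by simpa using fun _ _ => hm0⟩
  set B := {z : ι → ℂ | ∑ j, ‖z j‖ < m}
  have hB : Convex ℝ B := by simpa using convexOn_sum_norm.convex_lt m
  have hBo : IsOpen B := isOpen_lt (by fun_prop) continuous_const
  have hBC : Disjoint B C := Set.disjoint_left.mpr fun z hzB hzC => (hm z hzC).not_gt hzB
  obtain ⟨f, u, hfB, hfC⟩ := geometric_hahn_banach_open hB hBo hC hBC
  obtain ⟨w, hw⟩ := exists_eq_re_sum_mul f.toLinearMap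
  simp only [ContinuousLinearMap.coe_coe] at hw
  have hu : 0 < u := by simpa using hfB 0 (by simpa [B] using hm0)
  -- for `0 < a < m ‖w j‖`, the point `a ‖w j‖⁻² conj (w j) eⱼ` of `B` has `f`-value `a`
  have hwu : ∀ j, m * ‖w j‖ ≤ u := by
    intro j
    refine le_of_forall_lt_imp_le_of_dense fun a ha => ?_
    rcases le_or_gt a 0 with ha0 | ha0
    · exact ha0.trans hu.le
    have hwj : 0 < ‖w j‖ := pos_of_mul_pos_right (ha0.trans ha) hm0.le
    set z : ι → ℂ := Pi.single j ((a / ‖w j‖ ^ 2 : ℝ) * conj (w j))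
    have hzB : z ∈ B := by
      have : ∑ k, ‖z k‖ = a / ‖w j‖ := by
        rw [Finset.sum_eq_single j (fun k _ hk => by simp [z, hk]) (by simp)]
        simp only [z, Pi.single_eq_same, norm_mul, norm_real, Real.norm_eq_abs,
          RCLike.norm_conj]
        rw [abs_of_pos (by positivity)]
        field_simp
      simpa [B, this, div_lt_iff₀ hwj, mul_comm] using ha
    have hfz : f z = a := by
      rw [hw, Finset.sum_eq_single j (fun k _ hk => by simp [z, hk]) (by simp)]
      simp only [z, Pi.single_eq_same]
      rw [mul_left_comm, mul_conj, re_ofReal_mul, normSq_eq_norm_sq, ofReal_re]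
      field_simp
    exact (hfz ▸ hfB z hzB).le
  refine ⟨fun j => (m / u : ℝ) * w j, fun j => ?_, fun z hz => ?_⟩
  · rw [norm_mul, norm_real, Real.norm_of_nonneg (by positivity), div_mul_eq_mul_div,
      div_le_one hu]
    exact hwu j
  · have hre : (∑ j, (m / u : ℝ) * w j * z j).re = m / u * f z := by
      simp only [hw, mul_assoc, ← Finset.mul_sum, re_ofReal_mul]
    rw [hre]
    calc m = m / u * u := by field_simp
      _ ≤ m / u * f z := by gcongr; exact hfC z hz

end Separation

section DensityMatrix

variable {n : Type*} [Fintype n]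

theorem convex_setOf_isDensityMatrix : Convex ℝ {ρ : Matrix n n ℂ | IsDensityMatrix ρ} := by
  rintro ρ ⟨hρ, hρ1⟩ σ ⟨hσ, hσ1⟩ a b ha hb hab
  refine ⟨(hρ.smul ha).add (hσ.smul hb), ?_⟩
  rw [trace_add, trace_smul, trace_smul, hρ1, hσ1, ← add_smul, hab, one_smul]

theorem isDensityMatrix_vecMulVec {x : n → ℂ} (hx : star x ⬝ᵥ x = 1) :
    IsDensityMatrix (vecMulVec x (star x)) := by
  refine ⟨posSemidef_vecMulVec_self_star x, ?_⟩
  rw [← hx]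
  simp only [trace, diag_apply, vecMulVec_apply, dotProduct, Pi.star_apply, mul_comm]

variable [DecidableEq n]

theorem diagonal_mem_diagUnitary {ε : n → ℂ} (hε : ∀ j, ‖ε j‖ = 1) :
    diagonal ε ∈ diagUnitary n := by
  refine ⟨mem_unitaryGroup_iff'.mpr ?_, isDiag_diagonal ε⟩
  rw [star_eq_conjTranspose, diagonal_conjTranspose, diagonal_mul_diagonal, ← diagonal_one]
  congr 1
  ext j
  rw [Pi.star_apply, Complex.star_def, Complex.conj_mul', hε j]
  simp

theorem le_re_of_mulVec_eq_smul {V : Matrix n n ℂ} (hV : V ∈ unitaryGroup n ℂ) {c : n → ℝ}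
    (hc0 : ∀ j, 0 ≤ c j) (hc1 : ∀ j, c j ≤ 1) {m : ℝ} (hm : 0 < m)
    (h : ∀ ρ, IsDensityMatrix ρ → m ≤ (ρ * (V * diagonal fun j => (c j : ℂ))).trace.re)
    {ν : ℂ} {x : n → ℂ} (hx : x ≠ 0) (hVx : V *ᵥ x = ν • x) : m ≤ ν.re := by
  obtain ⟨a, ha, hy⟩ := exists_smul_star_dotProduct_self_eq_one hx
  set y := a • x
  have hVy : V *ᵥ y = ν • y := by rw [mulVec_smul, hVx, smul_comm]
  have hyV : star y ᵥ* V = ν • star y := by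
    rw [← conjTranspose_conjTranspose V, ← star_mulVec,
      conjTranspose_mulVec_eq_star_smul hV (smul_ne_zero ha hx) hVy, star_smul, star_star]
  set s : ℝ := ∑ j, c j * normSq (y j)
  have htrace : (vecMulVec y (star y) * (V * diagonal fun j => (c j : ℂ))).trace = ν * s := by
    rw [trace_vecMulVec_mul, ← mulVec_mulVec, dotProduct_mulVec, hyV, smul_dotProduct,
      smul_eq_mul]
    congr 1
    simp [s, dotProduct, mulVec_diagonal, normSq_eq_conj_mul_self, mul_left_comm]
  have hs0 : 0 ≤ s := Finset.sum_nonneg fun j _ => mul_nonneg (hc0 j) (normSq_nonneg _)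
  have hs1 : s ≤ 1 := by
    have hnorm : ((∑ j, normSq (y j) : ℝ) : ℂ) = 1 := by
      rw [← hy]
      simp [dotProduct, normSq_eq_conj_mul_self]
    calc s ≤ ∑ j, normSq (y j) :=
          Finset.sum_le_sum fun j _ => mul_le_of_le_one_left (normSq_nonneg _) (hc1 j)
      _ = 1 := by exact_mod_cast hnorm
  have hm' := h _ (isDensityMatrix_vecMulVec hy)
  rw [htrace, re_mul_ofReal] at hm'
  have hν : 0 < ν.re := by
    by_contra! hν
    linarith [mul_nonpos_of_nonpos_of_nonneg hν hs0]
  calc m ≤ ν.re * s := hm'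
    _ ≤ ν.re := mul_le_of_le_one_right hν.le hs1

theorem posSemidef_add_conjTranspose_sub_smul_one {V : Matrix n n ℂ}
    (hV : V ∈ unitaryGroup n ℂ) {m : ℝ}
    (h : ∀ (ν : ℂ) (x : n → ℂ), x ≠ 0 → V *ᵥ x = ν • x → m ≤ ν.re) :
    (V + Vᴴ - ((2 * m : ℝ) : ℂ) • 1).PosSemidef := by
  set H := V + Vᴴ - ((2 * m : ℝ) : ℂ) • 1
  have hH : H.IsHermitian := by
    simp only [H, IsHermitian, conjTranspose_sub, conjTranspose_add, conjTranspose_conjTranspose,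
      conjTranspose_smul, conjTranspose_one, Complex.star_def, conj_ofReal, add_comm]
  have hVV : Commute V Vᴴ :=
    (mem_unitaryGroup_iff.mp hV).trans (mem_unitaryGroup_iff'.mp hV).symm
  have hcomm : Commute (toLin' H) (toLin' V) :=
    (((Commute.refl V).add_left hVV.symm).sub_left ((Commute.one_left V).smul_left _)).map
      toLinAlgEquiv'
  refine posSemidef_iff_isHermitian_and_spectrum_nonneg.mpr ⟨hH, fun a ha => ?_⟩
  rw [← spectrum_toLin', ← Module.End.hasEigenvalue_iff_mem_spectrum] at ha
  obtain ⟨ν, x, ⟨hHx, hx⟩, hVx, -⟩ := Module.End.exists_hasEigenvector_of_commute hcomm ha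
  rw [Module.End.mem_eigenspace_iff, toLin'_apply] at hHx hVx
  have hVstar := conjTranspose_mulVec_eq_star_smul hV hx hVx
  have ha : a = ((2 * (ν.re - m) : ℝ) : ℂ) := by
    refine smul_left_injective ℂ hx ?_
    dsimp only
    rw [← hHx]
    simp only [H, sub_mulVec, add_mulVec, hVx, hVstar, smul_mulVec, one_mulVec, ← add_smul,
      ← sub_smul, Complex.star_def, add_conj]
    push_cast
    ring_nf
  rw [Set.mem_ofPred_eq, ha]
  exact zero_le_real.mpr (by linarith [h ν x hx hVx])

theorem le_re_trace_mul_of_forall_le_re {V : Matrix n n ℂ} (hV : V ∈ unitaryGroup n ℂ) {m : ℝ}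
    (h : ∀ (ν : ℂ) (x : n → ℂ), x ≠ 0 → V *ᵥ x = ν • x → m ≤ ν.re)
    {ρ : Matrix n n ℂ} (hρ : IsDensityMatrix ρ) : m ≤ (ρ * V).trace.re := by
  obtain ⟨hρ, hρ1⟩ := hρ
  have h0 := hρ.trace_mul_nonneg (posSemidef_add_conjTranspose_sub_smul_one hV h)
  have hVstar : (ρ * Vᴴ).trace = conj (ρ * V).trace := by
    rw [← hρ.1.eq, ← conjTranspose_mul, trace_conjTranspose, trace_mul_comm, hρ.1.eq,
      Complex.star_def]
  rw [Matrix.mul_sub, Matrix.mul_add, trace_sub, trace_add, hVstar, Matrix.mul_smul,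
    Matrix.mul_one, trace_smul, hρ1, smul_eq_mul, mul_one, add_conj, ← ofReal_sub] at h0
  linarith [zero_le_real.mp h0]

theorem exists_mem_diagUnitary_le_norm_trace {U : Matrix n n ℂ} (hU : U ∈ unitaryGroup n ℂ)
    {m : ℝ} (hm : ∀ ρ : Matrix n n ℂ, IsDensityMatrix ρ → m ≤ ∑ j, ‖(ρ * U) j j‖) :
    ∃ E ∈ diagUnitary n, ∀ ρ : Matrix n n ℂ, IsDensityMatrix ρ →
      m ≤ ‖(ρ * (U * E)).trace‖ := by
  rcases le_or_gt m 0 with hm0 | hm0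
  · exact ⟨1, ⟨one_mem _, isDiag_one⟩, fun ρ _ => hm0.trans (norm_nonneg _)⟩
  have hC : Convex ℝ ((fun ρ : Matrix n n ℂ => fun j => (ρ * U) j j) ''
      {ρ | IsDensityMatrix ρ}) :=
    convex_setOf_isDensityMatrix.is_linear_image
      ⟨fun ρ σ => by ext; simp [Matrix.add_mul], fun a ρ => by ext; simp⟩
  obtain ⟨w, hw1, hwm⟩ :=
    exists_norm_le_one_le_re_sum_mul hC (by rintro _ ⟨ρ, hρ, rfl⟩; exact hm ρ hρ)
  set E : Matrix n n ℂ := diagonal fun j => exp (arg (w j) * I)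
  have hE : E ∈ diagUnitary n := diagonal_mem_diagUnitary fun j => norm_exp_ofReal_mul_I _
  have hUE : U * E ∈ unitaryGroup n ℂ := mul_mem hU hE.1
  have hw : ∀ ρ, IsDensityMatrix ρ →
      m ≤ (ρ * (U * E * diagonal fun j => (‖w j‖ : ℂ))).trace.re := by
    intro ρ hρ
    convert hwm _ ⟨ρ, hρ, rfl⟩ using 2
    rw [Matrix.mul_assoc U, diagonal_mul_diagonal, ← Matrix.mul_assoc, trace_mul_diagonal]
    congr 1
    ext j
    rw [mul_comm (exp _), norm_mul_exp_arg_mul_I, mul_comm]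
  have hν : ∀ (ν : ℂ) (x : n → ℂ), x ≠ 0 → (U * E) *ᵥ x = ν • x → m ≤ ν.re :=
    fun ν x hx hUEx => le_re_of_mulVec_eq_smul hUE (fun j => norm_nonneg _) hw1 hm0 hw hx hUEx
  exact ⟨E, hE, fun ρ hρ => (le_re_trace_mul_of_forall_le_re hUE hν hρ).trans (re_le_norm _)⟩

end DensityMatrix

theorem sSup_sInf_eq_sInf_sSup_of_uniform {α β : Type*} (P : α → Prop) (S : Set β)
    (f : α → β → ℝ) (hf : ∀ a b, 0 ≤ f a b) (hbdd : ∀ a, BddAbove {t | ∃ b ∈ S, t = f a b})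
    (hS : S.Nonempty)
    (huniform : ∀ m : ℝ, (∀ a, P a → m ≤ sSup {t | ∃ b ∈ S, t = f a b}) →
      ∃ b₀ ∈ S, ∀ a, P a → m ≤ f a b₀) :
    sSup {t | ∃ b ∈ S, t = sInf {s | ∃ a, P a ∧ s = f a b}} =
      sInf {s | ∃ a, P a ∧ s = sSup {t | ∃ b ∈ S, t = f a b}} := by
  by_cases hP : ∃ a, P a
  swap
  · push Not at hP
    obtain ⟨b, hb⟩ := hS
    simp only [hP, false_and, exists_false, Set.ofPred_false, Real.sInf_empty]
    have hzero : {t : ℝ | ∃ b ∈ S, t = 0} = {0} :=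
      Set.ext fun t => ⟨fun ⟨_, _, ht⟩ => ht, fun ht => ⟨b, hb, ht⟩⟩
    rw [hzero, csSup_singleton]
  obtain ⟨a₀, ha₀⟩ := hP
  have hbddBelow : ∀ b, BddBelow {s | ∃ a, P a ∧ s = f a b} :=
    fun b => ⟨0, by rintro _ ⟨a, -, rfl⟩; exact hf a b⟩
  set m := sInf {s | ∃ a, P a ∧ s = sSup {t | ∃ b ∈ S, t = f a b}}
  have hm : ∀ a, P a → m ≤ sSup {t | ∃ b ∈ S, t = f a b} := fun a ha =>
    csInf_le ⟨0, by
      rintro _ ⟨a, -, rfl⟩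
      exact Real.sSup_nonneg (by rintro _ ⟨b, -, rfl⟩; exact hf a b)⟩ ⟨a, ha, rfl⟩
  have hle : ∀ b ∈ S, sInf {s | ∃ a, P a ∧ s = f a b} ≤ m := by
    intro b hb
    refine le_csInf ⟨_, a₀, ha₀, rfl⟩ ?_
    rintro _ ⟨a, ha, rfl⟩
    exact (csInf_le (hbddBelow b) ⟨a, ha, rfl⟩).trans (le_csSup (hbdd a) ⟨b, hb, rfl⟩)
  obtain ⟨b₀, hb₀, hb₀m⟩ := huniform m hm
  refine IsGreatest.csSup_eq ⟨⟨b₀, hb₀, le_antisymm ?_ (hle b₀ hb₀)⟩, ?_⟩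
  · exact le_csInf ⟨_, a₀, ha₀, rfl⟩ (by rintro _ ⟨a, ha, rfl⟩; exact hb₀m a ha)
  · rintro _ ⟨b, hb, rfl⟩
    exact hle b hb

theorem stmt14 (d : ℕ) (U : Matrix (Fin d) (Fin d) ℂ)
    (hU : U ∈ Matrix.unitaryGroup (Fin d) ℂ) :
    sSup { t : ℝ | ∃ E ∈ diagUnitary (Fin d), t =
      sInf { s : ℝ | ∃ ρ : Matrix (Fin d) (Fin d) ℂ, IsDensityMatrix ρ ∧
        s = ‖(ρ * (U * E)).trace‖ } } =
    sInf { s : ℝ | ∃ ρ : Matrix (Fin d) (Fin d) ℂ, IsDensityMatrix ρ ∧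
      s = sSup { t : ℝ | ∃ E ∈ diagUnitary (Fin d),
        t = ‖(ρ * (U * E)).trace‖ } } := by
  have h1 : (1 : Matrix (Fin d) (Fin d) ℂ) ∈ diagUnitary (Fin d) := ⟨one_mem _, isDiag_one⟩
  have hbound : ∀ ρ : Matrix (Fin d) (Fin d) ℂ, ∀ t ∈ {t | ∃ E ∈ diagUnitary (Fin d),
      t = ‖(ρ * (U * E)).trace‖}, t ≤ ∑ j, ‖(ρ * U) j j‖ := by
    rintro ρ _ ⟨E, hE, rfl⟩
    rw [← Matrix.mul_assoc]
    exact norm_trace_mul_le_sum_norm_diag _ hE.1 hE.2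
  refine sSup_sInf_eq_sInf_sSup_of_uniform _ _ _ (fun _ _ => norm_nonneg _)
    (fun ρ => ⟨_, hbound ρ⟩) ⟨1, h1⟩ fun m hm => ?_
  exact exists_mem_diagUnitary_le_norm_trace hU fun ρ hρ =>
    (hm ρ hρ).trans (csSup_le ⟨_, 1, h1, rfl⟩ (hbound ρ))

end Paper
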